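/- arXiv:1308.1504 — 4 statements merged into one kernel-verified Lean document; each statement's English description precedes it below -/
import Mathlib

section
/- Let n ≥ 1 and let X_goal be an n×n complex unitary matrix with det(I + X_goal) ≠ 0. Then the sublevel set K = {X̃ ∈ W : V(X̃) ≤ V(X_goal)} is a compact subset of the space of n×n complex matrices (with the Frobenius norm topology), and K is contained in W. -/
open Matrix

/-- The Lyapunov function `V(X̃) = -Tr ((X̃ - I)² (X̃ + I)⁻²)` (its value is real for unitary
`X̃` with no eigenvalue `-1`; we take the real part). -/
noncomputable def lyapV {n : ℕ} (X : Matrix (Fin n) (Fin n) ℂ) : ℝ :=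
  (-(((X - 1) * (X - 1)) * ((X + 1)⁻¹ * (X + 1)⁻¹)).trace).re

/-! The Cayley transform `C(X) = (I - X)(I + X)⁻¹` is an involution of the matrices with
`det (I + X) ≠ 0` which exchanges the unitary and the skew-Hermitian ones, and for such `X`
one has `V(X) = -Tr (C(X)²) = ‖C(X)‖²` (Frobenius norm). So the sublevel set is the image under
the continuous map `C` of the skew-Hermitian matrices in a closed Frobenius ball, a compact set.
-/

namespace Matrix

section Frobenius

open scoped Matrix.Norms.Frobenius

variable {m n 𝕜 : Type*} [Fintype m] [Fintype n] [RCLike 𝕜]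

theorem re_trace_conjTranspose_mul_self (A : Matrix m n 𝕜) :
    RCLike.re (Aᴴ * A).trace = ‖A‖ ^ 2 := by
  rw [frobenius_norm_def, ← Real.sqrt_eq_rpow, Real.sq_sqrt (by positivity), Finset.sum_comm]
  simp only [trace, diag, mul_apply, conjTranspose_apply, map_sum, RCLike.star_def,
    RCLike.conj_mul, ← RCLike.ofReal_pow, RCLike.ofReal_re, Real.rpow_two]

theorem isCompact_setOf_conjTranspose_eq_neg_norm_sq_le (c : ℝ) :
    IsCompact {A : Matrix n n 𝕜 | Aᴴ = -A ∧ ‖A‖ ^ 2 ≤ c} := by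
  refine Metric.isCompact_of_isClosed_isBounded ?_ ?_
  · exact (isClosed_eq continuous_id.matrix_conjTranspose continuous_neg).inter
      (isClosed_le (continuous_norm.pow 2) continuous_const)
  · refine (Metric.isBounded_closedBall (x := 0) (r := √c)).subset fun A hA => ?_
    rw [mem_closedBall_zero_iff]
    exact (le_abs_self _).trans (Real.abs_le_sqrt hA.2)

end Frobenius

variable {n R : Type*} [Fintype n] [DecidableEq n] [CommRing R]

noncomputable def cayley (X : Matrix n n R) : Matrix n n R :=
  (1 - X) * (1 + X)⁻¹

variable {X : Matrix n n R}

-- Also when `1 + X` is singular: both sides vanish, as `⁻¹` is `0` there.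
theorem cayley_eq_inv_mul (X : Matrix n n R) : cayley X = (1 + X)⁻¹ * (1 - X) := by
  by_cases h : IsUnit (1 + X).det
  · have hX : 1 - X = 2 - (1 + X) := by rw [← one_add_one_eq_two]; abel
    rw [cayley, hX, sub_mul, mul_sub, mul_nonsing_inv _ h, nonsing_inv_mul _ h, two_mul, mul_two]
  · rw [cayley, nonsing_inv_apply_not_isUnit _ h, mul_zero, zero_mul]

theorem cayley_eq_two_smul_inv_sub_one (h : IsUnit (1 + X).det) :
    cayley X = (2 : R) • (1 + X)⁻¹ - 1 := by
  have hX : 1 - X = (2 : R) • 1 - (1 + X) := by rw [two_smul]; abel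
  rw [cayley, hX, sub_mul, mul_nonsing_inv _ h, smul_mul_assoc, one_mul]

theorem conjTranspose_cayley [StarRing R] (X : Matrix n n R) : (cayley X)ᴴ = cayley Xᴴ := by
  rw [cayley_eq_inv_mul, conjTranspose_mul, conjTranspose_nonsing_inv, conjTranspose_sub,
    conjTranspose_add, conjTranspose_one, cayley]

section Invertible

variable [Invertible (2 : R)]

theorem isUnit_det_one_add_cayley (h : IsUnit (1 + X).det) : IsUnit (1 + cayley X).det := by
  refine isUnit_det_of_right_inverse (B := ⅟(2 : R) • (1 + X)) ?_
  rw [cayley_eq_two_smul_inv_sub_one h, add_sub_cancel, smul_mul_smul_comm, mul_invOf_self,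
    nonsing_inv_mul _ h, one_smul]

theorem cayley_cayley (h : IsUnit (1 + X).det) : cayley (cayley X) = X := by
  rw [cayley_eq_two_smul_inv_sub_one (isUnit_det_one_add_cayley h),
    cayley_eq_two_smul_inv_sub_one h, add_sub_cancel,
    Matrix.inv_smul _ (2 : R) (isUnit_nonsing_inv_det _ h), nonsing_inv_nonsing_inv _ h, smul_smul,
    mul_invOf_self, one_smul, add_sub_cancel_left]

end Invertible

theorem conjTranspose_cayley_of_mem_unitaryGroup [StarRing R] (hX : X ∈ unitaryGroup n R)
    (h : IsUnit (1 + X).det) : (cayley X)ᴴ = -cayley X := by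
  have hXHX : Xᴴ * X = 1 := mem_unitaryGroup_iff'.1 hX
  have hXXH : X * Xᴴ = 1 := mem_unitaryGroup_iff.1 hX
  have hH : IsUnit (1 + Xᴴ).det := by
    rwa [← conjTranspose_one, ← conjTranspose_add, det_conjTranspose, isUnit_star]
  have hinv : (1 + Xᴴ)⁻¹ = (1 + X)⁻¹ * X := by
    rw [show 1 + Xᴴ = Xᴴ * (1 + X) by rw [mul_add, mul_one, hXHX, add_comm],
      mul_inv_rev, inv_eq_left_inv hXXH]
  have hinvX : (1 + X)⁻¹ * X = 1 - (1 + X)⁻¹ :=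
    eq_sub_of_add_eq (by rw [← mul_add_one, add_comm X 1, nonsing_inv_mul _ h])
  rw [conjTranspose_cayley, cayley_eq_two_smul_inv_sub_one h, cayley_eq_two_smul_inv_sub_one hH,
    hinv, hinvX]
  module

theorem cayley_mem_unitaryGroup [StarRing R] {A : Matrix n n R} (hA : Aᴴ = -A)
    (h : IsUnit (1 + A).det) : cayley A ∈ unitaryGroup n R := by
  have h' : IsUnit (1 - A).det := by
    rwa [sub_eq_add_neg, ← hA, ← conjTranspose_one, ← conjTranspose_add, det_conjTranspose,
      isUnit_star]
  rw [mem_unitaryGroup_iff, star_eq_conjTranspose, conjTranspose_cayley, hA, cayley, cayley,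
    sub_neg_eq_add, ← sub_eq_add_neg, mul_assoc, ← mul_assoc (1 + A)⁻¹, nonsing_inv_mul _ h,
    one_mul, mul_nonsing_inv _ h']

open scoped ComplexOrder in
theorem isUnit_det_one_add_of_conjTranspose_eq_neg {𝕜 : Type*} [RCLike 𝕜]
    {A : Matrix n n 𝕜} (hA : Aᴴ = -A) : IsUnit (1 + A).det := by
  have hpos : ((1 + A)ᴴ * (1 + A)).PosDef := by
    have : (1 + A)ᴴ * (1 + A) = 1 + Aᴴ * A := by
      rw [conjTranspose_add, conjTranspose_one, hA]; noncomm_ring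
    exact this ▸ PosDef.one.add_posSemidef (posSemidef_conjTranspose_mul_self A)
  have := (isUnit_iff_isUnit_det _).1 hpos.isUnit
  rw [det_mul] at this
  exact isUnit_of_mul_isUnit_right this

theorem continuousAt_cayley {K : Type*} [Field K] [TopologicalSpace K]
    [IsTopologicalDivisionRing K] {X : Matrix n n K} (h : IsUnit (1 + X).det) :
    ContinuousAt cayley X := by
  have hinv : ContinuousAt Inv.inv (1 + X) :=
    continuousAt_matrix_inv _ (by rw [Ring.inverse_eq_inv']; exact continuousAt_inv₀ h.ne_zero)
  exact (continuousAt_const.sub continuousAt_id).mul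
    (hinv.comp (continuousAt_const.add continuousAt_id))

theorem continuousOn_cayley_setOf_conjTranspose_eq_neg {𝕜 : Type*} [RCLike 𝕜] :
    ContinuousOn cayley {A : Matrix n n 𝕜 | Aᴴ = -A} := fun _ hA =>
  (continuousAt_cayley (isUnit_det_one_add_of_conjTranspose_eq_neg hA)).continuousWithinAt

end Matrix

section Lyapunov

open scoped Matrix.Norms.Frobenius

variable {n : ℕ} {X : Matrix (Fin n) (Fin n) ℂ}

theorem lyapV_eq_neg_re_trace_cayley_mul_self (X : Matrix (Fin n) (Fin n) ℂ) :
    lyapV X = -(cayley X * cayley X).trace.re := by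
  have hprod : (X - 1) * (X - 1) * ((X + 1)⁻¹ * (X + 1)⁻¹) = cayley X * cayley X := by
    rw [add_comm X 1]
    calc (X - 1) * (X - 1) * ((1 + X)⁻¹ * (1 + X)⁻¹) = (1 - X) * cayley X * (1 + X)⁻¹ := by
          rw [cayley]; noncomm_ring
      _ = (1 - X) * ((1 + X)⁻¹ * (1 - X)) * (1 + X)⁻¹ := by rw [cayley_eq_inv_mul]
      _ = cayley X * cayley X := by rw [cayley]; simp only [mul_assoc]
  rw [lyapV, hprod, Complex.neg_re]

theorem lyapV_eq_norm_cayley_sq (h : (cayley X)ᴴ = -cayley X) : lyapV X = ‖cayley X‖ ^ 2 := by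
  rw [lyapV_eq_neg_re_trace_cayley_mul_self, ← re_trace_conjTranspose_mul_self, h, neg_mul,
    trace_neg, RCLike.re_to_complex, Complex.neg_re]

theorem setOf_lyapV_le_eq_image_cayley (c : ℝ) :
    {X : Matrix (Fin n) (Fin n) ℂ | X ∈ unitaryGroup (Fin n) ℂ ∧ (1 + X).det ≠ 0 ∧
      lyapV X ≤ c} = cayley '' {A | Aᴴ = -A ∧ ‖A‖ ^ 2 ≤ c} := by
  ext X
  constructor
  · rintro ⟨hXU, hdet, hV⟩
    have h := isUnit_iff_ne_zero.2 hdet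
    have hskew := conjTranspose_cayley_of_mem_unitaryGroup hXU h
    exact ⟨cayley X, ⟨hskew, lyapV_eq_norm_cayley_sq hskew ▸ hV⟩, cayley_cayley h⟩
  · rintro ⟨A, ⟨hA, hA_le⟩, rfl⟩
    have h := isUnit_det_one_add_of_conjTranspose_eq_neg hA
    have hskew : (cayley (cayley A))ᴴ = -cayley (cayley A) := by rwa [cayley_cayley h]
    refine ⟨cayley_mem_unitaryGroup hA h, (isUnit_det_one_add_cayley h).ne_zero, ?_⟩
    rw [lyapV_eq_norm_cayley_sq hskew, cayley_cayley h]
    exact hA_le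

end Lyapunov

theorem sublevel_set_compact_general (n : ℕ)
    (Xgoal : Matrix (Fin n) (Fin n) ℂ)
    (K : Set (Matrix (Fin n) (Fin n) ℂ))
    (hK : K = {X | X ∈ Matrix.unitaryGroup (Fin n) ℂ ∧ (1 + X).det ≠ 0 ∧
                   lyapV X ≤ lyapV Xgoal}) :
    IsCompact K ∧
    K ⊆ {X | X ∈ Matrix.unitaryGroup (Fin n) ℂ ∧ (1 + X).det ≠ 0} := by
  subst hK
  refine ⟨?_, fun X hX => ⟨hX.1, hX.2.1⟩⟩
  rw [setOf_lyapV_le_eq_image_cayley]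
  exact (isCompact_setOf_conjTranspose_eq_neg_norm_sq_le _).image_of_continuousOn
    (continuousOn_cayley_setOf_conjTranspose_eq_neg.mono fun _ hA => hA.1)

/-- For `X_goal` unitary with `det (I + X_goal) ≠ 0`, the sublevel set
`K = {X̃ ∈ W : V(X̃) ≤ V(X_goal)}` is compact (Frobenius, i.e. any, norm topology on the
finite-dimensional space of matrices) and contained in `W`. -/
theorem sublevel_set_compact (n : ℕ) (hn : 1 ≤ n)
    (Xgoal : Matrix (Fin n) (Fin n) ℂ)
    (hXgoal : Xgoal ∈ Matrix.unitaryGroup (Fin n) ℂ)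
    (hdet : (1 + Xgoal).det ≠ 0)
    (K : Set (Matrix (Fin n) (Fin n) ℂ))
    (hK : K = {X | X ∈ Matrix.unitaryGroup (Fin n) ℂ ∧ (1 + X).det ≠ 0 ∧
                   lyapV X ≤ lyapV Xgoal}) :
    IsCompact K ∧
    K ⊆ {X | X ∈ Matrix.unitaryGroup (Fin n) ℂ ∧ (1 + X).det ≠ 0} :=
  sublevel_set_compact_general n Xgoal K hK
end

section
/- Let n ≥ 1 and let X̂ be an n×n complex unitary matrix with det(I + X̂) ≠ 0. Set Ẑ = X̂(X̂ − I)(X̂ + I)^{−3}. If Tr(Ẑ Σ) = 0 for every skew-Hermitian n×n complex matrix Σ, then X̂ = I. -/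
open Matrix

/-! Writing an arbitrary complex matrix as `S + i T` with `S`, `T` skew-Hermitian shows that
`Tr (Ẑ Σ) = 0` for all skew-Hermitian `Σ` forces `Tr (Ẑ M) = 0` for every `M`, hence `Ẑ = 0`.
Since `X̂` and `X̂ + I` are invertible, cancelling them from `X̂ (X̂ - I) (X̂ + I)⁻³ = 0` leaves
`X̂ - I = 0`. -/

namespace Matrix

variable {ι : Type*}

lemma exists_skewHermitian_add_I_smul (M : Matrix ι ι ℂ) :
    ∃ S T : Matrix ι ι ℂ, Sᴴ = -S ∧ Tᴴ = -T ∧ M = S + Complex.I • T := by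
  refine ⟨(2 : ℂ)⁻¹ • (M - Mᴴ), (-Complex.I / 2) • (M + Mᴴ), by simp [smul_sub],
    by simp [smul_add, neg_div, add_comm], ?_⟩
  rw [smul_smul, ← mul_div_assoc, mul_neg, Complex.I_mul_I, neg_neg, one_div, ← smul_add,
    sub_add_add_cancel, ← two_smul ℂ M, smul_smul, inv_mul_cancel₀ two_ne_zero, one_smul]

lemma eq_zero_of_trace_mul_skewHermitian_eq_zero [Fintype ι] {Z : Matrix ι ι ℂ}
    (h : ∀ S : Matrix ι ι ℂ, Sᴴ = -S → (Z * S).trace = 0) : Z = 0 := by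
  refine ext_iff_trace_mul_right.mpr fun M => ?_
  obtain ⟨S, T, hS, hT, rfl⟩ := exists_skewHermitian_add_I_smul M
  rw [zero_mul, trace_zero, mul_add, trace_add, Matrix.mul_smul, trace_smul, h S hS, h T hT,
    smul_zero, add_zero]

end Matrix

lemma eq_one_of_mul_sub_one_mul_eq_zero {R : Type*} [Ring R] {a u : R} (ha : IsUnit a)
    (hu : IsUnit u) (h : a * (a - 1) * u = 0) : a = 1 :=
  sub_eq_zero.mp (ha.mul_right_eq_zero.mp (hu.mul_left_eq_zero.mp h))

theorem trace_vanishing_implies_identity_general (n : ℕ)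
    (X : Matrix (Fin n) (Fin n) ℂ)
    (hX : X ∈ Matrix.unitaryGroup (Fin n) ℂ)
    (hdet : (1 + X).det ≠ 0)
    (Z : Matrix (Fin n) (Fin n) ℂ)
    (hZ : Z = X * (X - 1) * ((X + 1)⁻¹ * (X + 1)⁻¹ * (X + 1)⁻¹))
    (htr : ∀ Sig : Matrix (Fin n) (Fin n) ℂ, Sigᴴ = -Sig → (Z * Sig).trace = 0) :
    X = 1 := by
  have hX_unit : IsUnit X := Unitary.isUnit_coe (U := ⟨X, hX⟩)
  have hinv_unit : IsUnit (X + 1)⁻¹ := by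
    rw [isUnit_nonsing_inv_iff, isUnit_iff_isUnit_det, add_comm]
    exact hdet.isUnit
  refine eq_one_of_mul_sub_one_mul_eq_zero hX_unit ((hinv_unit.mul hinv_unit).mul hinv_unit) ?_
  rw [← hZ]
  exact eq_zero_of_trace_mul_skewHermitian_eq_zero htr

/-- Let `X̂` be unitary with `det (I + X̂) ≠ 0` and set
`Ẑ = X̂ (X̂ - I) (X̂ + I)⁻³`.  If `Tr (Ẑ Σ) = 0` for every skew-Hermitian matrix `Σ`, then
`X̂ = I`. -/
theorem trace_vanishing_implies_identity (n : ℕ) (hn : 1 ≤ n)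
    (X : Matrix (Fin n) (Fin n) ℂ)
    (hX : X ∈ Matrix.unitaryGroup (Fin n) ℂ)
    (hdet : (1 + X).det ≠ 0)
    (Z : Matrix (Fin n) (Fin n) ℂ)
    (hZ : Z = X * (X - 1) * ((X + 1)⁻¹ * (X + 1)⁻¹ * (X + 1)⁻¹))
    (htr : ∀ Sig : Matrix (Fin n) (Fin n) ℂ, Sigᴴ = -Sig → (Z * Sig).trace = 0) :
    X = 1 :=
  trace_vanishing_implies_identity_general n X hX hdet Z hZ htr
end

section
/- (Intermediate point for the global two-step method.) Let n ≥ 1 and let X₀, X_goal be arbitrary n×n complex unitary matrices. Then there exists a unitary matrix X₁ ∈ U(n) such that both X₁ X₀† and X_goal X₁† have no eigenvalue equal to −1, i.e. det(I + X₁ X₀†) ≠ 0 and det(I + X_goal X₁†) ≠ 0. -/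
open Matrix Polynomial

/-- The Cayley-type map `t ↦ (1 - t i)/(1 + t i)` lands on the unit circle and is injective. -/
noncomputable def cayleyCircle (t : ℝ) : ℂ := (1 - t * Complex.I) / (1 + t * Complex.I)

lemma cayleyCircle_denom_ne_zero (t : ℝ) : (1 + (t : ℂ) * Complex.I) ≠ 0 := by
  intro h
  have := congrArg Complex.re h
  simp at this

lemma cayleyCircle_num_ne_zero (t : ℝ) : (1 - (t : ℂ) * Complex.I) ≠ 0 := by
  intro h
  have := congrArg Complex.re h
  simp at this

lemma cayleyCircle_mul_conj (t : ℝ) :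
    cayleyCircle t * (starRingEnd ℂ) (cayleyCircle t) = 1 := by
  unfold cayleyCircle
  rw [map_div₀]
  have h1 : (starRingEnd ℂ) (1 - (t : ℂ) * Complex.I) = 1 + t * Complex.I := by
    rw [map_sub, _root_.map_one, _root_.map_mul, Complex.conj_ofReal, Complex.conj_I]; ring
  have h2 : (starRingEnd ℂ) (1 + (t : ℂ) * Complex.I) = 1 - t * Complex.I := by
    rw [map_add, _root_.map_one, _root_.map_mul, Complex.conj_ofReal, Complex.conj_I]; ring
  rw [h1, h2]
  field_simp [cayleyCircle_denom_ne_zero t, cayleyCircle_num_ne_zero t]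

lemma cayleyCircle_injective : Function.Injective cayleyCircle := by
  intro s t h
  unfold cayleyCircle at h
  rw [div_eq_div_iff (cayleyCircle_denom_ne_zero s) (cayleyCircle_denom_ne_zero t)] at h
  have h2 : ((2 : ℂ) * t - 2 * s) * Complex.I = 0 := by linear_combination h
  rcases mul_eq_zero.mp h2 with h3 | h3
  · have hst : (s : ℂ) = t := by linear_combination -h3 / 2
    exact_mod_cast hst
  · exact absurd h3 Complex.I_ne_zero

lemma map_eval_one_sub_X_smul {n : ℕ} (A : Matrix (Fin n) (Fin n) ℂ) (z : ℂ) :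
    ((1 : Matrix (Fin n) (Fin n) ℂ[X]) - (X : ℂ[X]) • A.map Polynomial.C).map
      (Polynomial.eval z) = 1 - z • A := by
  ext i j
  rcases eq_or_ne i j with h | h <;>
    simp [h, Matrix.one_apply, Matrix.map_apply, Matrix.sub_apply, Matrix.smul_apply] <;>
      ring

/-- Intermediate point for the global two-step method.  For arbitrary
unitary `X₀`, `X_goal` there is a unitary `X₁` such that `X₁ X₀ᴴ` and `X_goal X₁ᴴ` have no
eigenvalue `-1`, i.e. `det (I + X₁ X₀ᴴ) ≠ 0` and `det (I + X_goal X₁ᴴ) ≠ 0`. -/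
theorem exists_intermediate_unitary (n : ℕ) (hn : 1 ≤ n)
    (X₀ Xgoal : Matrix (Fin n) (Fin n) ℂ)
    (hX₀ : X₀ ∈ Matrix.unitaryGroup (Fin n) ℂ)
    (hXgoal : Xgoal ∈ Matrix.unitaryGroup (Fin n) ℂ) :
    ∃ X₁ : Matrix (Fin n) (Fin n) ℂ,
      X₁ ∈ Matrix.unitaryGroup (Fin n) ℂ ∧
      (1 + X₁ * X₀ᴴ).det ≠ 0 ∧
      (1 + Xgoal * X₁ᴴ).det ≠ 0 := by
  set M : Matrix (Fin n) (Fin n) ℂ := Xgoal * X₀ᴴ with hM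
  -- the bad polynomial
  set p : ℂ[X] := (-M).charpolyRev * (X + 1) with hp
  have hp0 : p ≠ 0 := by
    have h1 : (-M).charpolyRev ≠ 0 := by
      intro h
      have := Matrix.eval_charpolyRev (M := -M)
      rw [h] at this
      simp at this
    exact mul_ne_zero h1 (X_add_C_ne_zero (1 : ℂ))
  -- pick a point on the unit circle avoiding the roots of p
  have hfin : {z : ℂ | p.IsRoot z}.Finite := Polynomial.finite_setOf_isRoot hp0
  have hinf : (Set.range cayleyCircle).Infinite :=
    Set.infinite_range_of_injective cayleyCircle_injective
  have hdiff : (Set.range cayleyCircle \ {z : ℂ | p.IsRoot z}).Infinite :=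
    hinf.diff hfin
  obtain ⟨z, hzmem, hznotroot⟩ := hdiff.nonempty
  obtain ⟨t, rfl⟩ := hzmem
  set z := cayleyCircle t
  have hzz : z * (starRingEnd ℂ) z = 1 := cayleyCircle_mul_conj t
  have hpz : p.eval z ≠ 0 := hznotroot
  have hcz : eval z (-M).charpolyRev ≠ 0 := by
    rw [hp, eval_mul] at hpz
    exact left_ne_zero_of_mul hpz
  have hz1 : z ≠ -1 := by
    intro h
    rw [hp, eval_mul] at hpz
    apply hpz
    rw [h]
    simp
  -- take c = conj z
  set c : ℂ := (starRingEnd ℂ) z with hc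
  have hcc : c * (starRingEnd ℂ) c = 1 := by
    rw [hc, Complex.conj_conj, mul_comm]
    exact hzz
  refine ⟨c • X₀, ?_, ?_, ?_⟩
  · rw [Matrix.mem_unitaryGroup_iff]
    have hX₀' : X₀ * star X₀ = 1 := (Matrix.mem_unitaryGroup_iff.mp hX₀)
    rw [star_smul, Matrix.smul_mul, Matrix.mul_smul, hX₀', smul_smul]
    rw [show (star c) = (starRingEnd ℂ) c from rfl, hcc, one_smul]
  · -- X₁ * X₀ᴴ = c • 1
    have hX₀' : X₀ * X₀ᴴ = 1 := by
      have := Matrix.mem_unitaryGroup_iff.mp hX₀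
      simpa [Matrix.star_eq_conjTranspose] using this
    have : (c • X₀) * X₀ᴴ = c • (1 : Matrix (Fin n) (Fin n) ℂ) := by
      rw [Matrix.smul_mul, hX₀']
    rw [this]
    have h1 : (1 : Matrix (Fin n) (Fin n) ℂ) + c • 1 = (1 + c) • 1 := by
      rw [add_smul, one_smul]
    rw [h1, Matrix.det_smul, Matrix.det_one, mul_one]
    apply pow_ne_zero
    intro h
    apply hz1
    have hc1 : c = -1 := by linear_combination h
    have hzc2 : z = (starRingEnd ℂ) c := (Complex.conj_conj z).symm
    rw [hzc2, hc1]
    simp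
  · -- Xgoal * (c • X₀)ᴴ = z • M
    have hconj : (c • X₀)ᴴ = (starRingEnd ℂ) c • X₀ᴴ := by
      rw [Matrix.conjTranspose_smul]
      rfl
    have hzc : (starRingEnd ℂ) c = z := by rw [hc, Complex.conj_conj]
    rw [hconj, hzc, Matrix.mul_smul, ← hM]
    -- det (1 + z • M) = eval z (charpolyRev (-M))
    have key : eval z (-M).charpolyRev = (1 + z • M).det := by
      rw [Matrix.charpolyRev]
      rw [← Polynomial.coe_evalRingHom, RingHom.map_det, RingHom.mapMatrix_apply,
        coe_evalRingHom, map_eval_one_sub_X_smul, smul_neg, sub_neg_eq_add]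
    rw [← key]
    exact hcz
end

section
/- (Stochastic Lyapunov convergence.) Let Ω be a probability space and 𝒲 a measurable space. Let X_j : Ω → 𝒲, j ∈ ℕ, be a Markov chain with respect to its natural filtration. Let Q : 𝒲 → ℝ and V : 𝒲 → ℝ be measurable nonnegative functions such that V(X_j) is integrable for all j ∈ ℕ. If for every j ∈ ℕ the conditional expectation satisfies E(V(X_{j+1}) | X_j) − V(X_j) = −Q(X_j) almost surely, then lim_{j→∞} Q(X_j) = 0 almost surely. -/
open MeasureTheory Filter

/-- Stochastic Lyapunov convergence, Kushner.  Let `(X_j)` be a Markov chain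
on a measurable space `𝒲` (Markov with respect to its natural filtration), and let
`Q, V : 𝒲 → ℝ` be measurable nonnegative functions with `V(X_j)` integrable.  If
`E(V(X_{j+1}) | X_j) - V(X_j) = -Q(X_j)` a.s. for every `j`, then `Q(X_j) → 0` a.s. -/
theorem stochastic_lyapunov_convergence
    (Ω : Type) [MeasurableSpace Ω] (μ : MeasureTheory.Measure Ω) [IsProbabilityMeasure μ]
    (W : Type) [mW : MeasurableSpace W]
    (X : ℕ → Ω → W) (hXmeas : ∀ j, Measurable (X j))
    -- Markov property with respect to the natural filtration:
    -- E(h(X_{j+1}) | σ(X_0, …, X_j)) = E(h(X_{j+1}) | σ(X_j)) for bounded measurable h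
    (hMarkov : ∀ (j : ℕ) (h : W → ℝ), Measurable h → (∃ C : ℝ, ∀ w, |h w| ≤ C) →
      μ[(fun ω => h (X (j + 1) ω)) |
          (⨆ i ∈ Set.Iic j, MeasurableSpace.comap (X i) mW)]
        =ᵐ[μ]
      μ[(fun ω => h (X (j + 1) ω)) | MeasurableSpace.comap (X j) mW])
    (Q V : W → ℝ)
    (hQmeas : Measurable Q) (hVmeas : Measurable V)
    (hQnonneg : ∀ w, 0 ≤ Q w) (hVnonneg : ∀ w, 0 ≤ V w)
    (hVint : ∀ j, Integrable (fun ω => V (X j ω)) μ)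
    -- the Lyapunov supermartingale identity E(V(X_{j+1}) | X_j) - V(X_j) = -Q(X_j)
    (hLyap : ∀ j : ℕ,
      μ[(fun ω => V (X (j + 1) ω)) | MeasurableSpace.comap (X j) mW]
        =ᵐ[μ]
      (fun ω => V (X j ω) - Q (X j ω))) :
    ∀ᵐ ω ∂μ, Filter.Tendsto (fun j => Q (X j ω)) Filter.atTop (nhds 0) := by
  classical
  have hm : ∀ j, MeasurableSpace.comap (X j) mW ≤ ‹MeasurableSpace Ω› :=
    fun j => (hXmeas j).comap_le
  -- integrability of Q ∘ X j
  have hQint : ∀ j, Integrable (fun ω => Q (X j ω)) μ := by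
    intro j
    have h1 : Integrable (fun ω => V (X j ω) - Q (X j ω)) μ :=
      (integrable_condExp (m := MeasurableSpace.comap (X j) mW)
        (f := fun ω => V (X (j + 1) ω))).congr (hLyap j)
    have h2 := (hVint j).sub h1
    have heq : (fun ω => Q (X j ω))
        = ((fun ω => V (X j ω)) - fun ω => V (X j ω) - Q (X j ω)) := by
      funext ω; simp
    rw [heq]; exact h2
  -- expectation identity
  have key : ∀ j, ∫ ω, Q (X j ω) ∂μ = (∫ ω, V (X j ω) ∂μ) - ∫ ω, V (X (j + 1) ω) ∂μ := by
    intro j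
    have h1 : ∫ ω, (μ[(fun ω => V (X (j + 1) ω)) | MeasurableSpace.comap (X j) mW]) ω ∂μ
        = ∫ ω, V (X (j + 1) ω) ∂μ := integral_condExp (hm j)
    have h2 : ∫ ω, (μ[(fun ω => V (X (j + 1) ω)) | MeasurableSpace.comap (X j) mW]) ω ∂μ
        = ∫ ω, (V (X j ω) - Q (X j ω)) ∂μ := integral_congr_ae (hLyap j)
    rw [integral_sub (hVint j) (hQint j)] at h2
    linarith [h1.symm.trans h2]
  -- partial sums of expectations are bounded
  have hsum : ∀ n, ∑ j ∈ Finset.range n, ∫ ω, Q (X j ω) ∂μ ≤ ∫ ω, V (X 0 ω) ∂μ := by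
    intro n
    have : ∑ j ∈ Finset.range n, ∫ ω, Q (X j ω) ∂μ
        = (∫ ω, V (X 0 ω) ∂μ) - ∫ ω, V (X n ω) ∂μ := by
      rw [Finset.sum_congr rfl fun j _ => key j]
      exact Finset.sum_range_sub' (fun j => ∫ ω, V (X j ω) ∂μ) n
    rw [this]
    have : 0 ≤ ∫ ω, V (X n ω) ∂μ := integral_nonneg fun ω => hVnonneg _
    linarith
  have hQnn : ∀ j, 0 ≤ ∫ ω, Q (X j ω) ∂μ := fun j => integral_nonneg fun ω => hQnonneg _
  -- pass to lintegrals
  have hlin : ∀ j, ∫⁻ ω, ENNReal.ofReal (Q (X j ω)) ∂μ = ENNReal.ofReal (∫ ω, Q (X j ω) ∂μ) :=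
    fun j => (ofReal_integral_eq_lintegral_ofReal (hQint j)
      (ae_of_all _ fun ω => hQnonneg _)).symm
  have htsum : ∑' j, ∫⁻ ω, ENNReal.ofReal (Q (X j ω)) ∂μ
      ≤ ENNReal.ofReal (∫ ω, V (X 0 ω) ∂μ) := by
    rw [ENNReal.tsum_eq_iSup_sum]
    refine iSup_le fun s => ?_
    obtain ⟨n, hn⟩ : ∃ n, s ⊆ Finset.range n := ⟨s.sup id + 1,
      fun i hi => Finset.mem_range.2 (Nat.lt_succ_of_le (Finset.le_sup (f := id) hi))⟩
    calc ∑ j ∈ s, ∫⁻ ω, ENNReal.ofReal (Q (X j ω)) ∂μ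
        = ENNReal.ofReal (∑ j ∈ s, ∫ ω, Q (X j ω) ∂μ) := by
          rw [Finset.sum_congr rfl fun j _ => hlin j, ENNReal.ofReal_sum_of_nonneg
            (fun j _ => hQnn j)]
      _ ≤ ENNReal.ofReal (∫ ω, V (X 0 ω) ∂μ) := by
          apply ENNReal.ofReal_le_ofReal
          calc ∑ j ∈ s, ∫ ω, Q (X j ω) ∂μ
              ≤ ∑ j ∈ Finset.range n, ∫ ω, Q (X j ω) ∂μ :=
                Finset.sum_le_sum_of_subset_of_nonneg hn fun j _ _ => hQnn j
            _ ≤ _ := hsum n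
  have hmeas : ∀ j, AEMeasurable (fun ω => ENNReal.ofReal (Q (X j ω))) μ :=
    fun j => (ENNReal.measurable_ofReal.comp (hQmeas.comp (hXmeas j))).aemeasurable
  have hfin : ∫⁻ ω, ∑' j, ENNReal.ofReal (Q (X j ω)) ∂μ ≠ ⊤ := by
    rw [lintegral_tsum hmeas]
    exact (lt_of_le_of_lt htsum ENNReal.ofReal_lt_top).ne
  have hae : ∀ᵐ ω ∂μ, ∑' j, ENNReal.ofReal (Q (X j ω)) < ⊤ :=
    ae_lt_top' (AEMeasurable.ennreal_tsum hmeas) hfin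
  filter_upwards [hae] with ω hω
  have hsumm : Summable fun j => (ENNReal.ofReal (Q (X j ω))).toReal :=
    ENNReal.summable_toReal hω.ne
  have heq : (fun j => (ENNReal.ofReal (Q (X j ω))).toReal) = fun j => Q (X j ω) := by
    funext j; exact ENNReal.toReal_ofReal (hQnonneg _)
  rw [heq] at hsumm
  exact hsumm.tendsto_atTop_zero
end
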